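/- arXiv:math/0211310 — 6 statements merged into one kernel-verified Lean document; each statement's English description precedes it below -/
import Mathlib

section
/- For every 2π-periodic odd function η ∈ L^{2p}(𝕋) with p ≥ 2 an even integer: ∫₀^{2π}∫₀^{2π} (η(s₁) − η(s₂))^p ds₁ ds₂ ≤ 2^p π ∫₀^{2π} η(s)^p ds. -/
open MeasureTheory Real intervalIntegral Finset

private lemma cheb_aux {f g : ℝ → ℝ} (hf : IntervalIntegrable f volume 0 (2*π))
    (hg : IntervalIntegrable g volume 0 (2*π))
    (hfg : IntervalIntegrable (fun x => f x * g x) volume 0 (2*π))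
    (h : ∀ x y, 0 ≤ (f x - f y) * (g x - g y)) :
    (∫ x in (0:ℝ)..(2*π), f x) * (∫ x in (0:ℝ)..(2*π), g x)
      ≤ 2*π * ∫ x in (0:ℝ)..(2*π), f x * g x := by
  have hπ : (0:ℝ) ≤ 2*π := by positivity
  set F := ∫ x in (0:ℝ)..(2*π), f x with hF
  set G := ∫ x in (0:ℝ)..(2*π), g x with hG
  set B := ∫ x in (0:ℝ)..(2*π), f x * g x with hB
  have inner : ∀ x, (∫ y in (0:ℝ)..(2*π), (f x - f y) * (g x - g y))
      = (2*π * (f x * g x) - f x * G) + (B - g x * F) := by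
    intro x
    have e : (fun y => (f x - f y) * (g x - g y))
        = fun y => (f x * g x - f x * g y) + (f y * g y - g x * f y) := by
      funext y; ring
    rw [e, intervalIntegral.integral_add
        ((_root_.intervalIntegrable_const).sub (hg.const_mul (f x)))
        (hfg.sub (hf.const_mul (g x))),
      intervalIntegral.integral_sub _root_.intervalIntegrable_const (hg.const_mul (f x)),
      intervalIntegral.integral_sub hfg (hf.const_mul (g x)),
      intervalIntegral.integral_const, intervalIntegral.integral_const_mul,
      intervalIntegral.integral_const_mul]
    simp only [smul_eq_mul, sub_zero, ← hG, ← hF, ← hB]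
  have key : (0:ℝ) ≤ ∫ x in (0:ℝ)..(2*π),
      ((2*π * (f x * g x) - f x * G) + (B - g x * F)) := by
    have h2 : ∀ x, (0:ℝ) ≤ (2*π * (f x * g x) - f x * G) + (B - g x * F) := by
      intro x
      rw [← inner x]
      exact intervalIntegral.integral_nonneg hπ (fun y _ => h x y)
    exact intervalIntegral.integral_nonneg hπ (fun x _ => h2 x)
  rw [intervalIntegral.integral_add
      (((hfg.const_mul (2*π))).sub (hf.mul_const G))
      ((_root_.intervalIntegrable_const).sub (hg.mul_const F)),
    intervalIntegral.integral_sub (hfg.const_mul (2*π)) (hf.mul_const G),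
    intervalIntegral.integral_sub _root_.intervalIntegrable_const (hg.mul_const F),
    intervalIntegral.integral_const, intervalIntegral.integral_const_mul,
    intervalIntegral.integral_mul_const, intervalIntegral.integral_mul_const] at key
  simp only [smul_eq_mul, sub_zero, ← hG, ← hF, ← hB] at key
  nlinarith [key]

theorem stmt4 (η : ℝ → ℝ) (p : ℕ) (hp : 2 ≤ p) (hpe : Even p)
    (hmeas : Measurable η)
    (hper : ∀ s, η (s + 2*π) = η s) (hodd : ∀ s, η (-s) = - η s)
    (hint : IntegrableOn (fun s => |η s|^(2*p)) (Set.Icc 0 (2*π))) :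
    (∫ s₁ in (0:ℝ)..(2*π), ∫ s₂ in (0:ℝ)..(2*π), (η s₁ - η s₂)^p)
      ≤ 2^p * π * ∫ s in (0:ℝ)..(2*π), (η s)^p := by
  have hπ : (0:ℝ) < 2*π := by positivity
  -- integrability of all powers up to 2p
  have hII : ∀ k, k ≤ 2*p → IntervalIntegrable (fun s => η s ^ k) volume 0 (2*π) := by
    intro k hk
    rw [intervalIntegrable_iff_integrableOn_Ioc_of_le hπ.le]
    have hb : IntegrableOn (fun s => 1 + |η s|^(2*p)) (Set.Ioc 0 (2*π)) :=
      (integrable_const 1).add (hint.mono_set Set.Ioc_subset_Icc_self)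
    refine hb.mono' ((hmeas.pow_const k).aestronglyMeasurable) ?_
    filter_upwards with s
    rw [Real.norm_eq_abs, abs_pow]
    rcases le_total (|η s|) 1 with h | h
    · have h1 : |η s| ^ k ≤ 1 := pow_le_one₀ (abs_nonneg _) h
      nlinarith [pow_nonneg (abs_nonneg (η s)) (2*p)]
    · have h1 : |η s| ^ k ≤ |η s| ^ (2*p) := pow_le_pow_right₀ h hk
      linarith
  set A : ℕ → ℝ := fun j => ∫ s in (0:ℝ)..(2*π), η s ^ j with hA
  -- odd powers integrate to zero
  have hA0 : ∀ j, Odd j → A j = 0 := by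
    intro j hj
    have hper' : Function.Periodic (fun s => η s ^ j) (2*π) := fun s => by simp [hper s]
    have h1 : A j = ∫ s in (-π)..π, η s ^ j := by
      have h2 := hper'.intervalIntegral_add_eq 0 (-π)
      simp only [zero_add] at h2
      rw [hA]; simp only
      rw [h2]
      congr 1
      ring
    have e1 : (∫ x in (-π)..π, η (-x) ^ j) = ∫ x in (-π)..π, η x ^ j := by
      have h3 := intervalIntegral.integral_comp_neg (a := -π) (b := π) (fun x => η x ^ j)
      simpa using h3
    have e2 : (∫ x in (-π)..π, η (-x) ^ j) = - ∫ x in (-π)..π, η x ^ j := by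
      have h4 : ∀ x : ℝ, η (-x) ^ j = -(η x ^ j) := fun x => by
        rw [hodd]; exact hj.neg_pow _
      simp only [h4, intervalIntegral.integral_neg]
    rw [h1]; linarith [e2 ▸ e1]
  -- expansion of the double integral
  have hinner : ∀ s₁, (∫ s₂ in (0:ℝ)..(2*π), (η s₁ - η s₂)^p)
      = ∑ m ∈ range (p+1),
          ((-1:ℝ)^(m+p) * (p.choose m : ℝ) * A (p-m)) * η s₁ ^ m := by
    intro s₁
    have e : (fun s₂ => (η s₁ - η s₂)^p)
        = fun s₂ => ∑ m ∈ range (p+1),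
            ((-1:ℝ)^(m+p) * (p.choose m : ℝ) * η s₁ ^ m) * η s₂ ^ (p-m) := by
      funext s₂
      rw [sub_pow]
      exact Finset.sum_congr rfl (fun m _ => by ring)
    rw [e, intervalIntegral.integral_finset_sum]
    · refine Finset.sum_congr rfl (fun m hm => ?_)
      rw [intervalIntegral.integral_const_mul]
      rw [hA]; ring
    · intro m hm
      exact (hII (p-m) (by omega)).const_mul _
  have houter : (∫ s₁ in (0:ℝ)..(2*π), ∫ s₂ in (0:ℝ)..(2*π), (η s₁ - η s₂)^p)
      = ∑ m ∈ range (p+1),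
          ((-1:ℝ)^(m+p) * (p.choose m : ℝ) * A (p-m)) * A m := by
    simp only [hinner]
    rw [intervalIntegral.integral_finset_sum]
    · exact Finset.sum_congr rfl (fun m hm => by
        rw [intervalIntegral.integral_const_mul, hA])
    · intro m hm
      exact (hII m (by rw [mem_range] at hm; omega)).const_mul _
  -- pointwise Chebyshev hypothesis
  have hpt : ∀ (a b : ℝ) (i j : ℕ), Even i → Even j →
      0 ≤ (a^i - b^i) * (a^j - b^j) := by
    intro a b i j hi hj
    rw [← hi.pow_abs a, ← hi.pow_abs b, ← hj.pow_abs a, ← hj.pow_abs b]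
    rcases le_total (|a|) (|b|) with h | h
    · rw [show (|a|^i - |b|^i) * (|a|^j - |b|^j)
          = (|b|^i - |a|^i) * (|b|^j - |a|^j) by ring]
      exact mul_nonneg (sub_nonneg.2 (pow_le_pow_left₀ (abs_nonneg a) h i))
        (sub_nonneg.2 (pow_le_pow_left₀ (abs_nonneg a) h j))
    · exact mul_nonneg (sub_nonneg.2 (pow_le_pow_left₀ (abs_nonneg b) h i))
        (sub_nonneg.2 (pow_le_pow_left₀ (abs_nonneg b) h j))
  -- Hölder / Chebyshev bound for even m
  have hcheb : ∀ m, m ≤ p → Even m → A (p-m) * A m ≤ 2*π * A p := by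
    intro m hm hme
    have hpm : Even (p-m) := (Nat.even_sub hm).2 (iff_of_true hpe hme)
    have hmul : (fun x => η x ^ (p-m) * η x ^ m) = fun x => η x ^ p := by
      funext x; rw [← pow_add, Nat.sub_add_cancel hm]
    have h5 := cheb_aux (f := fun s => η s ^ (p-m)) (g := fun s => η s ^ m)
      (hII (p-m) (by omega)) (hII m (by omega))
      (by rw [hmul]; exact hII p (by omega))
      (fun x y => hpt _ _ _ _ hpm hme)
    rw [hA]
    simp only [hmul] at h5
    exact h5
  rw [houter]
  have hAp : ∀ m ∈ range (p+1),
      ((-1:ℝ)^(m+p) * (p.choose m : ℝ) * A (p-m)) * A m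
        ≤ (if Even m then ((p.choose m : ℝ)) else 0) * (2*π * A p) := by
    intro m hm
    rw [mem_range] at hm
    rcases Nat.even_or_odd m with hme | hmo
    · have hsign : (-1:ℝ)^(m+p) = 1 := (hme.add hpe).neg_one_pow
      rw [if_pos hme, hsign]
      have := hcheb m (by omega) hme
      have hC : (0:ℝ) ≤ (p.choose m : ℝ) := Nat.cast_nonneg _
      calc 1 * (p.choose m : ℝ) * A (p-m) * A m
          = (p.choose m : ℝ) * (A (p-m) * A m) := by ring
        _ ≤ (p.choose m : ℝ) * (2*π * A p) := mul_le_mul_of_nonneg_left this hC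
    · rw [hA0 m hmo, if_neg (Nat.not_even_iff_odd.mpr hmo)]
      simp
  refine le_trans (Finset.sum_le_sum hAp) ?_
  rw [← Finset.sum_mul]
  -- even binomial sum
  have h1 : (∑ m ∈ range (p+1), ((p.choose m : ℝ))) = 2^p := by
    exact_mod_cast Nat.sum_range_choose p
  have h2 : (∑ m ∈ range (p+1), ((-1:ℝ))^m * (p.choose m : ℝ)) = 0 := by
    have h6 := Int.alternating_sum_range_choose_of_ne (n := p) (by omega)
    exact_mod_cast h6
  have h3 : ∀ m : ℕ, (2:ℝ) * (if Even m then ((p.choose m : ℝ)) else 0)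
      = (p.choose m : ℝ) + (-1)^m * (p.choose m : ℝ) := by
    intro m
    rcases Nat.even_or_odd m with h | h
    · rw [if_pos h, h.neg_one_pow]; ring
    · rw [if_neg (Nat.not_even_iff_odd.mpr h), h.neg_one_pow]; ring
  have h4 : 2 * (∑ m ∈ range (p+1), (if Even m then ((p.choose m : ℝ)) else 0)) = 2^p := by
    rw [Finset.mul_sum]
    simp only [h3]
    rw [Finset.sum_add_distrib, h1, h2, add_zero]
  have h5 : (2:ℝ)^p = 2 * 2^(p-1) := by
    rw [← pow_succ']; congr 1; omega
  have hsum : (∑ m ∈ range (p+1), (if Even m then ((p.choose m : ℝ)) else 0)) = 2^(p-1) := by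
    linarith
  rw [hsum]
  have : (2:ℝ)^(p-1) * (2*π*A p) = 2^p * π * A p := by rw [h5]; ring
  rw [this, hA]
end

section
/- For every 2π-periodic odd function η ∈ L^{2p}(𝕋) with p ≥ 2 an even integer: ∫₀^{2π}∫₀^{2π} (η(s₁) − η(s₂))^{2p} ds₁ ds₂ ≥ 2^{2p−1} (∫₀^{2π} η(s)^p ds)². -/
open MeasureTheory Real Finset

/-! Expand `(η s₁ - η s₂) ^ (2p)` binomially: the double integral becomes
`∑ₘ (-1)ᵐ C(2p, m) Iₘ I₂ₚ₋ₘ` with `Iₖ = ∫ η ^ k`. Odd moments of an odd periodic function vanish,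
and for `m = 2j` Cauchy–Schwarz applied to `|η| ^ j · |η| ^ (p - j)` gives `I₂ⱼ I₂ₚ₋₂ⱼ ≥ Iₚ²`.
Hence the double integral is at least `Iₚ² ∑_{m even} C(2p, m) = 2 ^ (2p - 1) Iₚ²`. -/

lemma sum_range_choose_even {n : ℕ} (hn : n ≠ 0) :
    ∑ m ∈ range (n + 1), (if Even m then (n.choose m : ℝ) else 0) = 2 ^ (n - 1) := by
  have h_sum : ∑ m ∈ range (n + 1), (n.choose m : ℝ) = 2 ^ n := by
    exact_mod_cast Nat.sum_range_choose n
  have h_alt : ∑ m ∈ range (n + 1), (-1 : ℝ) ^ m * n.choose m = 0 := by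
    exact_mod_cast Int.alternating_sum_range_choose_of_ne hn
  have h_double : ∀ m, 2 * (if Even m then (n.choose m : ℝ) else 0)
      = n.choose m + (-1 : ℝ) ^ m * n.choose m := by
    intro m
    rcases Nat.even_or_odd m with hm | hm
    · rw [if_pos hm, hm.neg_one_pow]; ring
    · rw [if_neg (Nat.not_even_iff_odd.mpr hm), hm.neg_one_pow]; ring
  have h_pow : (2 : ℝ) ^ n = 2 * 2 ^ (n - 1) := by
    rw [← pow_succ', Nat.sub_add_cancel (Nat.one_le_iff_ne_zero.mpr hn)]
  have h : 2 * ∑ m ∈ range (n + 1), (if Even m then (n.choose m : ℝ) else 0)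
      = 2 * 2 ^ (n - 1) := by
    rw [mul_sum, sum_congr rfl fun m _ => h_double m, sum_add_distrib, h_sum, h_alt, add_zero,
      h_pow]
  linarith

lemma abs_pow_le_one_add_abs_pow (x : ℝ) {k n : ℕ} (hk : k ≤ n) : |x| ^ k ≤ 1 + |x| ^ n := by
  rcases le_or_gt |x| 1 with hx | hx
  · linarith [pow_le_one₀ (abs_nonneg x) hx (n := k), pow_nonneg (abs_nonneg x) n]
  · linarith [pow_le_pow_right₀ hx.le hk]

lemma intervalIntegral.integral_eq_zero_of_odd {f : ℝ → ℝ} (hf : f.Odd) (a : ℝ) :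
    ∫ x in -a..a, f x = 0 := by
  have h := integral_comp_neg (a := -a) (b := a) f
  simp only [neg_neg, hf.eq, integral_neg] at h
  linarith

lemma Function.Periodic.intervalIntegral_eq_zero_of_odd {f : ℝ → ℝ} {T : ℝ} (hper : f.Periodic T)
    (hodd : f.Odd) : ∫ x in 0..T, f x = 0 := by
  have h := hper.intervalIntegral_add_eq 0 (-(T / 2))
  rw [zero_add, show -(T / 2) + T = T / 2 by ring] at h
  rw [h, intervalIntegral.integral_eq_zero_of_odd hodd]

section

variable {α : Type*} [MeasurableSpace α] {μ : Measure α} {f : α → ℝ}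

lemma integrable_pow_of_integrable_abs_pow [IsFiniteMeasure μ] (hf : AEStronglyMeasurable f μ)
    {n k : ℕ} (h : Integrable (fun x => |f x| ^ n) μ) (hk : k ≤ n) :
    Integrable (fun x => f x ^ k) μ :=
  ((integrable_const 1).add h).mono' (hf.pow k) <| .of_forall fun x => by
    rw [norm_pow, Real.norm_eq_abs]
    exact abs_pow_le_one_add_abs_pow (f x) hk

lemma sq_integral_mul_le_integral_sq_mul_integral_sq {g : α → ℝ} (hf : MemLp f 2 μ)
    (hg : MemLp g 2 μ) :
    (∫ x, f x * g x ∂μ) ^ 2 ≤ (∫ x, f x ^ 2 ∂μ) * ∫ x, g x ^ 2 ∂μ := by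
  have inner_toLp : ∀ {u v : α → ℝ} (hu : MemLp u 2 μ) (hv : MemLp v 2 μ),
      inner ℝ (hu.toLp u) (hv.toLp v) = ∫ x, u x * v x ∂μ := by
    intro u v hu hv
    rw [L2.inner_def]
    refine integral_congr_ae ?_
    filter_upwards [hu.coeFn_toLp, hv.coeFn_toLp] with x hux hvx
    simp [hux, hvx, mul_comm]
  have h := real_inner_mul_inner_self_le (hf.toLp f) (hg.toLp g)
  simp only [inner_toLp] at h
  simpa [sq] using h

lemma sq_integral_pow_add_le (hf : AEStronglyMeasurable f μ) {j k : ℕ}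
    (hj : Integrable (fun x => f x ^ (2 * j)) μ) (hk : Integrable (fun x => f x ^ (2 * k)) μ) :
    (∫ x, f x ^ (j + k) ∂μ) ^ 2 ≤ (∫ x, f x ^ (2 * j) ∂μ) * ∫ x, f x ^ (2 * k) ∂μ := by
  have sq_abs_pow : ∀ m, (fun x => (|f x| ^ m) ^ 2) = fun x => f x ^ (2 * m) := fun m =>
    funext fun x => by rw [← pow_mul, mul_comm, (even_two_mul m).pow_abs]
  have memLp_abs_pow : ∀ m, Integrable (fun x => f x ^ (2 * m)) μ →
      MemLp (fun x => |f x| ^ m) 2 μ := fun m hm =>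
    (memLp_two_iff_integrable_sq (f := fun x => |f x| ^ m)
      ((continuous_abs.comp_aestronglyMeasurable hf).pow m)).mpr (by rwa [sq_abs_pow])
  have abs_integral_le : |∫ x, f x ^ (j + k) ∂μ| ≤ ∫ x, |f x| ^ j * |f x| ^ k ∂μ := by
    simpa only [pow_add, abs_mul, abs_pow] using
      abs_integral_le_integral_abs (f := fun x => f x ^ (j + k))
  calc (∫ x, f x ^ (j + k) ∂μ) ^ 2 ≤ (∫ x, |f x| ^ j * |f x| ^ k ∂μ) ^ 2 := by
        rw [← sq_abs]; exact pow_le_pow_left₀ (abs_nonneg _) abs_integral_le 2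
    _ ≤ (∫ x, (|f x| ^ j) ^ 2 ∂μ) * ∫ x, (|f x| ^ k) ^ 2 ∂μ :=
        sq_integral_mul_le_integral_sq_mul_integral_sq (memLp_abs_pow j hj) (memLp_abs_pow k hk)
    _ = (∫ x, f x ^ (2 * j) ∂μ) * ∫ x, f x ^ (2 * k) ∂μ := by rw [sq_abs_pow, sq_abs_pow]

lemma integral_integral_sub_pow {n : ℕ} (hint : ∀ k ≤ n, Integrable (fun x => f x ^ k) μ) :
    ∫ x, ∫ y, (f x - f y) ^ n ∂μ ∂μ = ∑ m ∈ range (n + 1),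
      (-1) ^ (m + n) * (∫ x, f x ^ m ∂μ) * (∫ x, f x ^ (n - m) ∂μ) * n.choose m := by
  have inner : ∀ x, ∫ y, (f x - f y) ^ n ∂μ = ∑ m ∈ range (n + 1),
      (-1) ^ (m + n) * f x ^ m * (∫ y, f y ^ (n - m) ∂μ) * n.choose m := by
    intro x
    simp_rw [sub_pow]
    rw [integral_finsetSum _ fun m _ => ((hint _ (Nat.sub_le n m)).const_mul _).mul_const _]
    refine sum_congr rfl fun m _ => ?_
    rw [integral_mul_const, integral_const_mul]
  simp_rw [inner]
  rw [integral_finsetSum _ fun m hm =>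
    (((hint m (Nat.lt_succ_iff.mp (mem_range.mp hm))).const_mul _).mul_const _).mul_const _]
  refine sum_congr rfl fun m _ => ?_
  rw [integral_mul_const, integral_mul_const, integral_const_mul]

theorem two_pow_mul_sq_integral_pow_le_integral_integral_sub_pow {p : ℕ} (hp : p ≠ 0)
    (hf : AEStronglyMeasurable f μ) (hint : ∀ k ≤ 2 * p, Integrable (fun x => f x ^ k) μ)
    (hodd : ∀ k, Odd k → ∫ x, f x ^ k ∂μ = 0) :
    2 ^ (2 * p - 1) * (∫ x, f x ^ p ∂μ) ^ 2 ≤ ∫ x, ∫ y, (f x - f y) ^ (2 * p) ∂μ ∂μ := by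
  rw [integral_integral_sub_pow hint, ← sum_range_choose_even (by omega), sum_mul]
  refine sum_le_sum fun m hm => ?_
  have hm : m ≤ 2 * p := Nat.lt_succ_iff.mp (mem_range.mp hm)
  rcases Nat.even_or_odd m with ⟨j, rfl⟩ | hm_odd
  · have hj : j ≤ p := by omega
    have h_cs := sq_integral_pow_add_le hf (hint (2 * j) (by omega)) (hint (2 * (p - j)) (by omega))
    rw [Nat.add_sub_cancel' hj] at h_cs
    rw [if_pos ⟨j, rfl⟩, (Even.add ⟨j, rfl⟩ (even_two_mul p)).neg_one_pow, one_mul,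
      show 2 * p - (j + j) = 2 * (p - j) by omega, ← two_mul, mul_comm _ ((∫ x, f x ^ p ∂μ) ^ 2)]
    exact mul_le_mul_of_nonneg_right h_cs (Nat.cast_nonneg _)
  · rw [if_neg (Nat.not_even_iff_odd.mpr hm_odd), hodd m hm_odd]
    simp

end

theorem stmt5_general (η : ℝ → ℝ) (p : ℕ) (hp : 2 ≤ p)
    (hmeas : Measurable η)
    (hper : ∀ s, η (s + 2*π) = η s) (hodd : ∀ s, η (-s) = - η s)
    (hint : IntegrableOn (fun s => |η s|^(2*p)) (Set.Icc 0 (2*π))) :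
    2^(2*p - 1) * (∫ s in (0:ℝ)..(2*π), (η s)^p)^2
      ≤ ∫ s₁ in (0:ℝ)..(2*π), ∫ s₂ in (0:ℝ)..(2*π), (η s₁ - η s₂)^(2*p) := by
  have hT : 0 ≤ 2 * π := by positivity
  set μ := volume.restrict (Set.Ioc 0 (2 * π))
  have hη : AEStronglyMeasurable η μ := hmeas.aestronglyMeasurable
  have h_int : ∀ k ≤ 2 * p, Integrable (fun s => η s ^ k) μ := fun k hk =>
    integrable_pow_of_integrable_abs_pow hη (hint.mono_set Set.Ioc_subset_Icc_self) hk
  have h_odd_moments : ∀ k, Odd k → ∫ s, η s ^ k ∂μ = 0 := fun k hk => by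
    rw [← intervalIntegral.integral_of_le hT]
    exact Function.Periodic.intervalIntegral_eq_zero_of_odd (fun s => by simp only [hper])
      (fun s => by simp only [hodd, hk.neg_pow])
  simp_rw [intervalIntegral.integral_of_le hT]
  exact two_pow_mul_sq_integral_pow_le_integral_integral_sub_pow (by omega) hη h_int h_odd_moments

theorem stmt5 (η : ℝ → ℝ) (p : ℕ) (hp : 2 ≤ p) (hpe : Even p)
    (hmeas : Measurable η)
    (hper : ∀ s, η (s + 2*π) = η s) (hodd : ∀ s, η (-s) = - η s)
    (hint : IntegrableOn (fun s => |η s|^(2*p)) (Set.Icc 0 (2*π))) :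
    2^(2*p - 1) * (∫ s in (0:ℝ)..(2*π), (η s)^p)^2
      ≤ ∫ s₁ in (0:ℝ)..(2*π), ∫ s₂ in (0:ℝ)..(2*π), (η s₁ - η s₂)^(2*p) :=
  stmt5_general η p hp hmeas hper hodd hint
end

section
/- Let A : ℝ → ℝ be C¹, 2π-periodic, with ∫₀^{2π} A(s) ds = 0, and let a(s) := 4A'(s). Then ∫₀^{2π} ∫₀^{π} 2x (A(t+x) − A(t−x)) (a(t+x) + a(t−x)) dx dt = −8π ∫₀^{2π} A(s)² ds. -/
open MeasureTheory Real intervalIntegral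

/-!
For fixed `x`, `F t = (A (t + x) - A (t - x)) ^ 2 / 2 - A (t - x) ^ 2` is periodic with
`F' t = (A (t + x) - A (t - x)) * (A' (t + x) + A' (t - x)) - 2 * A (t + x) * A' (t - x)`, so the
`t`-integral of the product is `2 ∫ A (t + 2x) A' t dt`. Substituting `y = 2x` and exchanging the
integrals leaves `∫ A' t (∫₀^{2π} y A (t + y) dy) dt`. As `A` has mean zero, its primitive `B`
is periodic, and by parts the inner integral is `2π B t - ∫ B`; since `∫ A' = 0` and
`∫ A' B = -∫ A²`, the result follows.
-/

theorem Continuous.intervalIntegral_intervalIntegral_swap {F : ℝ → ℝ → ℝ}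
    (hF : Continuous fun p : ℝ × ℝ => F p.1 p.2) (a b c d : ℝ) :
    ∫ x in a..b, ∫ y in c..d, F x y = ∫ y in c..d, ∫ x in a..b, F x y :=
  MeasureTheory.intervalIntegral_intervalIntegral_swap <|
    (hF.continuousOn.integrableOn_compact (isCompact_uIcc.prod isCompact_uIcc)).mono_set
      (Set.prod_mono Set.uIoc_subset_uIcc Set.uIoc_subset_uIcc)

namespace Function.Periodic

variable {E : Type*} [NormedAddCommGroup E] [NormedSpace ℝ E] {f F : ℝ → E} {T : ℝ}

theorem deriv (hf : Periodic f T) : Periodic (_root_.deriv f) T := fun t => by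
  rw [← deriv_comp_add_const, hf.funext]

theorem intervalIntegral_comp_add_right (hf : Periodic f T) (c : ℝ) :
    ∫ t in 0..T, f (t + c) = ∫ t in 0..T, f t := by
  rw [integral_comp_add_right, zero_add, add_comm, hf.intervalIntegral_add_eq c 0, zero_add]

theorem intervalIntegral_eq_zero_of_hasDerivAt [CompleteSpace E] (hF : Periodic F T)
    (hderiv : ∀ t, HasDerivAt F (f t) t) (hint : IntervalIntegrable f volume 0 T) :
    ∫ t in 0..T, f t = 0 := by
  rw [integral_eq_sub_of_hasDerivAt (fun t _ => hderiv t) hint, sub_eq_zero]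
  simpa using hF 0

theorem periodic_primitive_of_integral_eq_zero (hf : Periodic f T) (hcont : Continuous f)
    (hmean : ∫ t in 0..T, f t = 0) : Periodic (fun s => ∫ t in 0..s, f t) T := fun s => by
  simp only [hf.intervalIntegral_add_eq_add 0 s fun _ _ => hcont.intervalIntegrable _ _,
    zero_add, hmean, add_zero]

end Function.Periodic

open Function

section

variable {A : ℝ → ℝ} {T : ℝ}

theorem integral_sub_mul_deriv_add (hA : ContDiff ℝ 1 A) (hper : Periodic A T) (x : ℝ) :
    ∫ t in 0..T, (A (t + x) - A (t - x)) * (deriv A (t + x) + deriv A (t - x))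
      = 2 * ∫ t in 0..T, A (t + 2 * x) * deriv A t := by
  have hd := hA.differentiable one_ne_zero
  have hAc := hA.continuous
  have hA'c := hA.continuous_deriv le_rfl
  have hF : ∀ t, HasDerivAt (fun t => (A (t + x) - A (t - x)) ^ 2 / 2 - A (t - x) ^ 2)
      ((A (t + x) - A (t - x)) * (deriv A (t + x) + deriv A (t - x))
        - 2 * (A (t + x) * deriv A (t - x))) t := by
    intro t
    have hplus := (hd (t + x)).hasDerivAt.comp_add_const t x
    have hminus := (hd (t - x)).hasDerivAt.comp_sub_const t x
    refine ((((hplus.fun_sub hminus).fun_pow 2).div_const 2).fun_sub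
      (hminus.fun_pow 2)).congr_deriv ?_
    push_cast
    ring
  have hFper : Periodic (fun t => (A (t + x) - A (t - x)) ^ 2 / 2 - A (t - x) ^ 2) T := by
    intro t
    have hplus : A (t + T + x) = A (t + x) := hper.add_const x t
    have hminus : A (t + T - x) = A (t - x) := hper.sub_const x t
    simp only [hplus, hminus]
  have hzero := hFper.intervalIntegral_eq_zero_of_hasDerivAt hF
    ((by fun_prop : Continuous _).intervalIntegrable _ _)
  rw [integral_sub ((by fun_prop : Continuous _).intervalIntegrable _ _)
    ((by fun_prop : Continuous _).intervalIntegrable _ _),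
    intervalIntegral.integral_const_mul] at hzero
  have hshift : ∫ t in 0..T, A (t + x) * deriv A (t - x)
      = ∫ t in 0..T, A (t + 2 * x) * deriv A t := by
    have hg : Periodic (fun t => A (t + 2 * x) * deriv A t) T :=
      (hper.add_const (2 * x)).mul hper.deriv
    refine Eq.trans (integral_congr fun t _ => ?_) (hg.intervalIntegral_comp_add_right (-x))
    congr 2; ring
  linarith

theorem integral_mul_comp_add_eq {B : ℝ → ℝ} (hA : Continuous A)
    (hB : ∀ s, HasDerivAt B (A s) s) (hBper : Periodic B T) (u : ℝ) :
    ∫ y in 0..T, y * A (u + y) = T * B u - ∫ s in 0..T, B s := by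
  have hv : ∀ y, HasDerivAt (fun y => B (u + y)) (A (u + y)) y :=
    fun y => (hB (u + y)).comp_const_add u y
  rw [integral_mul_deriv_eq_deriv_mul (fun y _ => hasDerivAt_id' y) (fun y _ => hv y)
    intervalIntegrable_const ((by fun_prop : Continuous _).intervalIntegrable _ _), hBper u]
  simp only [zero_mul, one_mul, sub_zero, add_comm u, hBper.intervalIntegral_comp_add_right]

theorem integral_mul_integral_comp_add_mul_deriv (hA : ContDiff ℝ 1 A) (hper : Periodic A T)
    (hmean : ∫ s in 0..T, A s = 0) :
    ∫ y in 0..T, y * ∫ t in 0..T, A (t + y) * deriv A t = -T * ∫ s in 0..T, A s ^ 2 := by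
  have hd := hA.differentiable one_ne_zero
  have hAc := hA.continuous
  have hA'c := hA.continuous_deriv le_rfl
  set B := fun s => ∫ t in 0..s, A t
  have hB : ∀ s, HasDerivAt B (A s) s :=
    fun s => (hAc.integral_hasStrictDerivAt 0 s).hasDerivAt
  have hBper : Periodic B T := hper.periodic_primitive_of_integral_eq_zero hAc hmean
  have hB_cont : Continuous B := continuous_iff_continuousAt.2 fun s => (hB s).continuousAt
  have hderiv_mean : ∫ t in 0..T, deriv A t = 0 :=
    hper.intervalIntegral_eq_zero_of_hasDerivAt (fun t => (hd t).hasDerivAt)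
      ((by fun_prop : Continuous _).intervalIntegrable _ _)
  have hby_parts : ∫ t in 0..T, deriv A t * B t = -∫ t in 0..T, A t ^ 2 := by
    have := (hper.mul hBper).intervalIntegral_eq_zero_of_hasDerivAt
      (fun t => (hd t).hasDerivAt.mul (hB t)) ((by fun_prop : Continuous _).intervalIntegrable _ _)
    rw [integral_add ((by fun_prop : Continuous _).intervalIntegrable _ _)
      ((by fun_prop : Continuous _).intervalIntegrable _ _)] at this
    simp only [← sq] at this
    linarith
  calc ∫ y in 0..T, y * ∫ t in 0..T, A (t + y) * deriv A t
      = ∫ y in 0..T, ∫ t in 0..T, deriv A t * (y * A (t + y)) := by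
        refine integral_congr fun y _ => ?_
        rw [← intervalIntegral.integral_const_mul]
        refine integral_congr fun t _ => ?_
        ring
    _ = ∫ t in 0..T, deriv A t * ∫ y in 0..T, y * A (t + y) := by
        rw [Continuous.intervalIntegral_intervalIntegral_swap (by fun_prop)]
        simp_rw [intervalIntegral.integral_const_mul]
    _ = ∫ t in 0..T, (T * (deriv A t * B t) - (∫ s in 0..T, B s) * deriv A t) := by
        refine integral_congr fun t _ => ?_
        rw [integral_mul_comp_add_eq hAc hB hBper]
        ring
    _ = -T * ∫ s in 0..T, A s ^ 2 := by
        rw [integral_sub ((by fun_prop : Continuous _).intervalIntegrable _ _)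
          ((by fun_prop : Continuous _).intervalIntegrable _ _),
          intervalIntegral.integral_const_mul, intervalIntegral.integral_const_mul, hby_parts,
          hderiv_mean]
        ring

end

theorem stmt13 (A : ℝ → ℝ) (hA : ContDiff ℝ 1 A) (hper : ∀ s, A (s + 2*π) = A s)
    (hmean : (∫ s in (0:ℝ)..(2*π), A s) = 0)
    (a : ℝ → ℝ) (ha : ∀ s, a s = 4 * deriv A s) :
    (∫ t in (0:ℝ)..(2*π), ∫ x in (0:ℝ)..π,
        2*x*(A (t+x) - A (t-x))*(a (t+x) + a (t-x)))
      = -8*π * ∫ s in (0:ℝ)..(2*π), (A s)^2 := by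
  have hinner : ∀ x, ∫ t in 0..2 * π,
      2 * x * (A (t + x) - A (t - x)) * (4 * deriv A (t + x) + 4 * deriv A (t - x))
        = 8 * (2 * x * ∫ t in 0..2 * π, A (t + 2 * x) * deriv A t) := fun x => by
    calc _ = 8 * x * ∫ t in 0..2 * π,
          (A (t + x) - A (t - x)) * (deriv A (t + x) + deriv A (t - x)) := by
          rw [← intervalIntegral.integral_const_mul]
          exact integral_congr fun t _ => by ring
      _ = _ := by
          rw [integral_sub_mul_deriv_add hA hper]
          ring
  simp only [ha]
  rw [Continuous.intervalIntegral_intervalIntegral_swap (by fun_prop)]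
  simp only [hinner, intervalIntegral.integral_const_mul]
  rw [intervalIntegral.integral_comp_mul_left
      (fun y => y * ∫ t in 0..2 * π, A (t + y) * deriv A t) two_ne_zero, mul_zero,
    integral_mul_integral_comp_add_mul_deriv hA hper hmean]
  ring
end

section
/- Let E be a Hilbert space and G ∈ C¹(E, ℝ) be positively homogeneous of degree q+1 (q > 1) with DG : E → E* compact, and suppose m := sup_{v≠0} G(v)/‖v‖^{q+1} > 0. Then the set K₀ := { v ∈ E : ‖v‖ = 1, G(v) = m } is nonempty and compact. -/
/-! By homogeneity, `m` is the supremum of `G` on the closed unit ball, and `G u ≤ m ‖u‖^(q+1)`.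
By the mean value theorem, a finite net of the relatively compact set `DG(ball)` makes `G`
weakly continuous on the ball, which is weakly compact (Banach–Alaoglu, transported through the
Riesz isomorphism); so `G` attains `m` on the ball, necessarily on the sphere. On `K₀` the
function `G - m ‖·‖^(q+1)` has a global maximum, so `DG v = (q+1) m ⟪v, ·⟫`: thus `K₀` lies in
the continuous image of the compact set `closure (DG(K₀))`, and is closed. -/

open Topology Filter Metric

-- `sSup` of an empty or unbounded set of reals is `0`.
theorem Real.isLUB_sSup_of_pos {S : Set ℝ} (h : 0 < sSup S) : IsLUB S (sSup S) := by
  refine isLUB_csSup ?_ ?_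
  · by_contra hS
    rw [Set.not_nonempty_iff_eq_empty.mp hS, Real.sSup_empty] at h
    exact lt_irrefl 0 h
  · by_contra hS
    rw [Real.sSup_of_not_bddAbove hS] at h
    exact lt_irrefl 0 h

section Homogeneous

variable {E : Type*} [NormedAddCommGroup E] [NormedSpace ℝ E]

def IsPosHomogeneous (G : E → ℝ) (p : ℝ) : Prop :=
  ∀ c : ℝ, 0 ≤ c → ∀ v : E, G (c • v) = c ^ p * G v

variable {G : E → ℝ} {p m : ℝ}

theorem IsPosHomogeneous.apply_zero (hhom : IsPosHomogeneous G p) (hp : p ≠ 0) : G 0 = 0 := by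
  simpa [Real.zero_rpow hp] using hhom 0 le_rfl 0

theorem IsPosHomogeneous.apply_inv_norm_smul (hhom : IsPosHomogeneous G p) {v : E} (hv : v ≠ 0) :
    G (‖v‖⁻¹ • v) = G v / ‖v‖ ^ p := by
  have hv' : 0 < ‖v‖ := norm_pos_iff.mpr hv
  rw [hhom _ (inv_nonneg.mpr hv'.le), Real.inv_rpow hv'.le, inv_mul_eq_div]

theorem IsPosHomogeneous.le_mul_norm_rpow_of_isLUB (hhom : IsPosHomogeneous G p) (hp : 0 < p)
    (hm : IsLUB {x : ℝ | ∃ v : E, v ≠ 0 ∧ x = G v / ‖v‖ ^ p} m) (u : E) :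
    G u ≤ m * ‖u‖ ^ p := by
  rcases eq_or_ne u 0 with rfl | hu
  · simp [hhom.apply_zero hp.ne', Real.zero_rpow hp.ne']
  · have hpos : 0 < ‖u‖ ^ p := Real.rpow_pos_of_pos (norm_pos_iff.mpr hu) p
    rw [← div_le_iff₀ hpos]
    exact hm.1 ⟨u, hu, rfl⟩

theorem IsPosHomogeneous.le_of_isLUB_of_forall_norm_le_one (hhom : IsPosHomogeneous G p)
    {M : ℝ} (hM : ∀ u : E, ‖u‖ ≤ 1 → G u ≤ M)
    (hm : IsLUB {x : ℝ | ∃ v : E, v ≠ 0 ∧ x = G v / ‖v‖ ^ p} m) : m ≤ M := by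
  refine hm.2 ?_
  rintro _ ⟨v, hv, rfl⟩
  rw [← hhom.apply_inv_norm_smul hv]
  exact hM _ (by rw [norm_smul, norm_inv, norm_norm, inv_mul_cancel₀ (norm_ne_zero_iff.mpr hv)])

end Homogeneous

section WeakContinuity

variable {E : Type*} [NormedAddCommGroup E] [NormedSpace ℝ E] {G : E → ℝ} {s : Set E}

theorem continuous_weakSpace_apply (g : StrongDual ℝ E) :
    Continuous fun x : WeakSpace ℝ E => g x :=
  WeakBilin.eval_continuous (topDualPairing ℝ E).flip g

/- A finite `δ`-net `t` of `DG(s)` reduces the oscillation of `G` on `s` to that of finitely many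
functionals, which are weakly continuous. -/
theorem exists_abs_sub_le_of_fderiv_image_subset (hG : Differentiable ℝ G) (hs : Convex ℝ s)
    {u v : E} (hu : u ∈ s) (hv : v ∈ s) {t : Set (StrongDual ℝ E)} {δ : ℝ}
    (ht : fderiv ℝ G '' s ⊆ ⋃ g ∈ t, ball g δ) :
    ∃ g ∈ t, |G u - G v| ≤ δ * ‖u - v‖ + |g (u - v)| := by
  obtain ⟨w, hw, hGw⟩ := domain_mvt (fun x _ => (hG x).hasFDerivAt.hasFDerivWithinAt)
    convex_univ (Set.mem_univ v) (Set.mem_univ u)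
  obtain ⟨g, hg, hwg⟩ : ∃ g ∈ t, fderiv ℝ G w ∈ ball g δ := by
    simpa using ht ⟨w, hs.segment_subset hv hu hw, rfl⟩
  refine ⟨g, hg, ?_⟩
  have hclose : ‖fderiv ℝ G w - g‖ ≤ δ := (mem_ball_iff_norm.mp hwg).le
  calc |G u - G v| = |(fderiv ℝ G w - g) (u - v) + g (u - v)| := by simp [hGw]
    _ ≤ ‖(fderiv ℝ G w - g) (u - v)‖ + |g (u - v)| := abs_add_le _ _
    _ ≤ δ * ‖u - v‖ + |g (u - v)| := by
        gcongr
        exact (ContinuousLinearMap.le_opNorm _ _).trans (by gcongr)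

theorem continuousOn_weakSpace_of_totallyBounded_fderiv (hG : Differentiable ℝ G)
    (hs : Convex ℝ s) (hsb : Bornology.IsBounded s) (hDG : TotallyBounded (fderiv ℝ G '' s)) :
    ContinuousOn (fun x : WeakSpace ℝ E => G ((toWeakSpace ℝ E).symm x))
      (toWeakSpace ℝ E '' s) := by
  rintro _ ⟨v, hv, rfl⟩
  obtain ⟨C, hC⟩ := isBounded_iff.mp hsb
  rw [ContinuousWithinAt, Metric.tendsto_nhds]
  intro ε hε
  set δ := ε / (2 * (|C| + 1))
  have hδ : 0 < δ := by positivity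
  obtain ⟨t, htfin, hcover⟩ := Metric.totallyBounded_iff.mp hDG δ hδ
  have hnear : ∀ᶠ x in 𝓝 (toWeakSpace ℝ E v),
      ∀ g ∈ t, |g ((toWeakSpace ℝ E).symm x - v)| < ε / 2 := by
    rw [eventually_all_finite htfin]
    intro g _
    have hg := (continuous_weakSpace_apply g).tendsto (toWeakSpace ℝ E v)
    filter_upwards [Metric.tendsto_nhds.mp hg (ε / 2) (by positivity)] with x hx
    rw [map_sub]
    exact hx
  filter_upwards [nhdsWithin_le_nhds hnear, self_mem_nhdsWithin] with x hx ⟨u, hu, hux⟩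
  subst hux
  obtain ⟨g, hg, hGuv⟩ := exists_abs_sub_le_of_fderiv_image_subset hG hs hu hv hcover
  have huv : ‖u - v‖ ≤ |C| := (dist_eq_norm u v ▸ hC hu hv).trans (le_abs_self C)
  have hδC : δ * ‖u - v‖ ≤ ε / 2 := by
    calc δ * ‖u - v‖ ≤ δ * (|C| + 1) := by gcongr; linarith
      _ = ε / 2 := by simp only [δ]; field_simp
  have hgx := hx g hg
  rw [LinearEquiv.symm_apply_apply] at hgx
  simp only [Real.dist_eq, LinearEquiv.symm_apply_apply]
  linarith

end WeakContinuity

section InnerProduct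

variable {E : Type*} [NormedAddCommGroup E] [InnerProductSpace ℝ E]

theorem fderiv_eq_smul_innerSL_of_le_mul_norm_rpow {G : E → ℝ} {v : E}
    (hG : DifferentiableAt ℝ G v) {m p : ℝ} (hp : 1 < p) (hle : ∀ u, G u ≤ m * ‖u‖ ^ p)
    (hv : G v = m * ‖v‖ ^ p) :
    fderiv ℝ G v = (m * (p * ‖v‖ ^ (p - 2))) • innerSL ℝ v := by
  have hmax : IsLocalMax (fun u => G u - m * ‖u‖ ^ p) v :=
    Eventually.of_forall fun u => by simp only [hv, sub_self, sub_nonpos, hle u]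
  have hderiv := hmax.hasFDerivAt_eq_zero
    (hG.hasFDerivAt.sub ((hasFDerivAt_norm_rpow v hp).const_mul m))
  rw [sub_eq_zero, smul_smul] at hderiv
  exact hderiv

end InnerProduct

section Hilbert

variable {E : Type*} [NormedAddCommGroup E] [InnerProductSpace ℝ E] [CompleteSpace E]

theorem continuous_toWeakSpace_toDual_symm :
    Continuous fun f : WeakDual ℝ E =>
      toWeakSpace ℝ E ((InnerProductSpace.toDual ℝ E).symm (WeakDual.toStrongDual f)) := by
  refine WeakBilin.continuous_of_continuous_eval (topDualPairing ℝ E).flip fun g => ?_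
  have hswap : ∀ f : WeakDual ℝ E,
      g ((InnerProductSpace.toDual ℝ E).symm (WeakDual.toStrongDual f)) =
        f ((InnerProductSpace.toDual ℝ E).symm g) := by
    intro f
    rw [← InnerProductSpace.toDual_symm_apply (𝕜 := ℝ), real_inner_comm,
      InnerProductSpace.toDual_symm_apply]
    rfl
  exact (WeakDual.eval_continuous (𝕜 := ℝ) _).congr fun f => (hswap f).symm

theorem isCompact_toWeakSpace_closedBall (x : E) (r : ℝ) :
    IsCompact (toWeakSpace ℝ E '' closedBall x r) := by
  set T := InnerProductSpace.toDual ℝ E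
  convert (WeakDual.isCompact_closedBall (T x) r).image continuous_toWeakSpace_toDual_symm
    using 1
  ext y
  constructor
  · rintro ⟨u, hu, rfl⟩
    refine ⟨StrongDual.toWeakDual (T u), ?_, ?_⟩
    · exact (T.dist_map u x).trans_le hu
    · exact T.symm_apply_apply u
  · rintro ⟨f, hf, rfl⟩
    refine ⟨T.symm (WeakDual.toStrongDual f), ?_, rfl⟩
    rw [mem_closedBall, ← T.symm_apply_apply x, T.symm.dist_map]
    exact hf

theorem exists_isMaxOn_closedBall_of_totallyBounded_fderiv {G : E → ℝ}
    (hG : Differentiable ℝ G) {x : E} {r : ℝ} (hr : 0 ≤ r)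
    (hDG : TotallyBounded (fderiv ℝ G '' closedBall x r)) :
    ∃ u ∈ closedBall x r, IsMaxOn G (closedBall x r) u := by
  obtain ⟨_, ⟨u, hu, rfl⟩, hmax⟩ := (isCompact_toWeakSpace_closedBall x r).exists_isMaxOn
    ((nonempty_closedBall.mpr hr).image _)
    (continuousOn_weakSpace_of_totallyBounded_fderiv hG (convex_closedBall x r)
      isBounded_closedBall hDG)
  refine ⟨u, hu, fun v hv => ?_⟩
  simpa using hmax (Set.mem_image_of_mem _ hv)

theorem isCompact_of_fderiv_eq_smul_innerSL {G : E → ℝ} {K : Set E} {c : ℝ} (hc : c ≠ 0)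
    (hK : IsClosed K) (hDK : IsCompact (closure (fderiv ℝ G '' K)))
    (hGK : ∀ v ∈ K, fderiv ℝ G v = c • innerSL ℝ v) : IsCompact K := by
  set T := InnerProductSpace.toDual ℝ E
  refine (hDK.image (T.symm.continuous.const_smul c⁻¹)).of_isClosed_subset hK fun v hv => ?_
  refine ⟨fderiv ℝ G v, subset_closure ⟨v, hv, rfl⟩, ?_⟩
  have hTv : innerSL ℝ v = T v := rfl
  show c⁻¹ • T.symm (fderiv ℝ G v) = v
  rw [hGK v hv, hTv, map_smulₛₗ, T.symm_apply_apply, conj_trivial, smul_smul,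
    inv_mul_cancel₀ hc, one_smul]

end Hilbert

theorem stmt15 {E : Type*} [NormedAddCommGroup E] [InnerProductSpace ℝ E]
    [CompleteSpace E]
    (q : ℝ) (hq : 1 < q) (G : E → ℝ) (hG : ContDiff ℝ 1 G)
    (hhom : ∀ c : ℝ, 0 ≤ c → ∀ v : E, G (c • v) = c ^ (q+1) * G v)
    (hcomp : ∀ s : Set E, Bornology.IsBounded s → IsCompact (closure (fderiv ℝ G '' s)))
    (m : ℝ) (hm : m = sSup {x : ℝ | ∃ v : E, v ≠ 0 ∧ x = G v / ‖v‖ ^ (q+1)})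
    (hmpos : 0 < m) :
    {v : E | ‖v‖ = 1 ∧ G v = m}.Nonempty ∧ IsCompact {v : E | ‖v‖ = 1 ∧ G v = m} := by
  have hp : 1 < q + 1 := by linarith
  have hGd : Differentiable ℝ G := hG.differentiable one_ne_zero
  have hlub : IsLUB {x : ℝ | ∃ v : E, v ≠ 0 ∧ x = G v / ‖v‖ ^ (q+1)} m :=
    hm ▸ Real.isLUB_sSup_of_pos (hm ▸ hmpos)
  have hGhom : IsPosHomogeneous G (q + 1) := hhom
  have hle := hGhom.le_mul_norm_rpow_of_isLUB (by linarith) hlub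
  obtain ⟨u, hu, hmax⟩ := exists_isMaxOn_closedBall_of_totallyBounded_fderiv hGd zero_le_one
    ((hcomp _ isBounded_closedBall).totallyBounded.subset subset_closure)
  have hmu : m ≤ G u := hGhom.le_of_isLUB_of_forall_norm_le_one
    (fun x hx => hmax (mem_closedBall_zero_iff.mpr hx)) hlub
  have hu1 : ‖u‖ = 1 := by
    refine le_antisymm (mem_closedBall_zero_iff.mp hu) (not_lt.mp fun hlt => ?_)
    have := Real.rpow_lt_one (norm_nonneg u) hlt (by linarith : 0 < q + 1)
    nlinarith [hle u]
  have hGu : G u = m := le_antisymm (by simpa [hu1] using hle u) hmu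
  have hclosed : IsClosed {v : E | ‖v‖ = 1 ∧ G v = m} :=
    (isClosed_eq continuous_norm continuous_const).inter
      (isClosed_eq hG.continuous continuous_const)
  have hbdd : Bornology.IsBounded {v : E | ‖v‖ = 1 ∧ G v = m} :=
    (isBounded_sphere (x := 0) (r := 1)).subset fun v hv => mem_sphere_zero_iff_norm.mpr hv.1
  refine ⟨⟨u, hu1, hGu⟩,
    isCompact_of_fderiv_eq_smul_innerSL (c := m * (q + 1)) (by positivity) hclosed (hcomp _ hbdd) fun v hv => ?_⟩
  simpa [hv.1] using
    fderiv_eq_smul_innerSL_of_le_mul_norm_rpow (hGd v) hp hle (by simp [hv.1, hv.2])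
end

section
/- Let E be a Hilbert space, B its closed unit ball, and G : E → ℝ a C¹ function such that for every δ > 0 there is a finite-dimensional subspace F_δ ⊆ E with |DG(v)[h]| ≤ δ‖h‖ for all v ∈ B and all h ⊥ F_δ. Then for the orthogonal projection P_δ onto F_δ one has |G(v) − G(P_δ v)| ≤ δ for all v ∈ B, and consequently G restricted to B is sequentially continuous for the weak topology of E. -/
/-!
Write `v = P v + w` with `w ⊥ F`. Both `P v` and `w` are no longer than `v`, so the segment
from `P v` to `v` stays in the unit ball, and along it `G` only moves in the direction
`w ∈ Fᗮ`, where its derivative is at most `δ`; the mean value inequality gives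
`|G v - G (P v)| ≤ δ`. For weak sequential continuity, `v ↦ G (P v)` turns weak convergence
into norm convergence because `P` has finite-dimensional range, and it approximates `G`
uniformly on the ball to within any `δ > 0`.
-/

open Filter Topology Set
open scoped RealInnerProductSpace

theorem norm_sub_le_of_norm_fderiv_apply_le_on_segment {E F : Type*} [NormedAddCommGroup E]
    [NormedSpace ℝ E] [NormedAddCommGroup F] [NormedSpace ℝ F] {f : E → F} {x y : E} {C : ℝ}
    (hf : ∀ z ∈ segment ℝ x y, DifferentiableAt ℝ f z)
    (bound : ∀ z ∈ segment ℝ x y, ‖fderiv ℝ f z (y - x)‖ ≤ C) :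
    ‖f y - f x‖ ≤ C := by
  have mem_segment (t : ℝ) (ht : t ∈ Icc 0 1) : x + t • (y - x) ∈ segment ℝ x y :=
    segment_eq_image' ℝ x y ▸ mem_image_of_mem _ ht
  have hpath : ∀ t ∈ Icc (0 : ℝ) 1, HasDerivWithinAt (fun t : ℝ ↦ f (x + t • (y - x)))
      (fderiv ℝ f (x + t • (y - x)) (y - x)) (Icc 0 1) t := by
    intro t ht
    have hline : HasDerivAt (fun t : ℝ ↦ x + t • (y - x)) (y - x) t := by
      simpa using ((hasDerivAt_id t).smul_const (y - x)).const_add x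
    exact ((hf _ (mem_segment t ht)).hasFDerivAt.comp_hasDerivAt t hline).hasDerivWithinAt
  simpa using norm_image_sub_le_of_norm_deriv_le_segment_01' hpath
    fun t ht ↦ bound _ (mem_segment t (Ico_subset_Icc_self ht))

theorem norm_le_norm_add_of_inner_eq_zero {E : Type*} [NormedAddCommGroup E]
    [InnerProductSpace ℝ E] {x y : E} (h : ⟪x, y⟫ = 0) : ‖x‖ ≤ ‖x + y‖ := by
  have hpyth := norm_add_sq_eq_norm_sq_add_norm_sq_real h
  nlinarith [norm_nonneg x, norm_nonneg y, norm_nonneg (x + y)]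

theorem abs_sub_le_of_abs_fderiv_orthogonal_le {E : Type*} [NormedAddCommGroup E]
    [InnerProductSpace ℝ E] {G : E → ℝ} (hG : Differentiable ℝ G)
    {K : Submodule ℝ E} {δ : ℝ} (hδ : 0 ≤ δ)
    (hK : ∀ v : E, ‖v‖ ≤ 1 → ∀ h ∈ Kᗮ, |fderiv ℝ G v h| ≤ δ * ‖h‖)
    {v p : E} (hp : p ∈ K) (hvp : v - p ∈ Kᗮ) (hv : ‖v‖ ≤ 1) :
    |G v - G p| ≤ δ := by
  have hinner : ⟪p, v - p⟫ = 0 := Submodule.inner_right_of_mem_orthogonal hp hvp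
  have hp_norm : ‖p‖ ≤ 1 :=
    (add_sub_cancel p v ▸ norm_le_norm_add_of_inner_eq_zero hinner).trans hv
  have hvp_norm : ‖v - p‖ ≤ 1 := by
    rw [real_inner_comm] at hinner
    exact (sub_add_cancel v p ▸ norm_le_norm_add_of_inner_eq_zero hinner).trans hv
  have hsegment : segment ℝ p v ⊆ Metric.closedBall 0 1 :=
    (convex_closedBall 0 1).segment_subset (mem_closedBall_zero_iff.2 hp_norm)
      (mem_closedBall_zero_iff.2 hv)
  simpa only [Real.norm_eq_abs] using
    norm_sub_le_of_norm_fderiv_apply_le_on_segment (fun z _ ↦ hG z) fun z hz ↦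
      calc ‖fderiv ℝ G z (v - p)‖ ≤ δ * ‖v - p‖ :=
            hK z (mem_closedBall_zero_iff.1 (hsegment hz)) _ hvp
        _ ≤ δ := mul_le_of_le_one_right hδ hvp_norm

theorem ContinuousLinearMap.tendsto_apply_of_forall_tendsto_dual {ι 𝕜 E F : Type*}
    [NontriviallyNormedField 𝕜] [CompleteSpace 𝕜] [NormedAddCommGroup E] [NormedSpace 𝕜 E]
    [NormedAddCommGroup F] [NormedSpace 𝕜 F] [FiniteDimensional 𝕜 F] (T : E →L[𝕜] F)
    {l : Filter ι} {v : ι → E} {v₀ : E}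
    (hweak : ∀ f : E →L[𝕜] 𝕜, Tendsto (fun n ↦ f (v n)) l (𝓝 (f v₀))) :
    Tendsto (fun n ↦ T (v n)) l (𝓝 (T v₀)) := by
  let e := (Module.finBasis 𝕜 F).equivFun.toContinuousLinearEquiv
  have hcoord : Tendsto (fun n ↦ e (T (v n))) l (𝓝 (e (T v₀))) :=
    tendsto_pi_nhds.2 fun i ↦
      hweak ((ContinuousLinearMap.proj i).comp (e.toContinuousLinearMap.comp T))
  simpa [Function.comp_def] using (e.symm.continuous.tendsto _).comp hcoord

theorem tendsto_of_forall_eventually_dist_le {ι α : Type*} [PseudoMetricSpace α] {l : Filter ι}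
    {a : ι → α} {a₀ : α}
    (happrox : ∀ ε > 0, ∃ (b : ι → α) (b₀ : α), Tendsto b l (𝓝 b₀) ∧
      (∀ᶠ n in l, dist (a n) (b n) ≤ ε) ∧ dist a₀ b₀ ≤ ε) :
    Tendsto a l (𝓝 a₀) := by
  refine Metric.tendsto_nhds.2 fun ε hε ↦ ?_
  obtain ⟨b, b₀, hb, hab, hab₀⟩ := happrox (ε / 4) (by positivity)
  filter_upwards [hab, Metric.tendsto_nhds.1 hb (ε / 4) (by positivity)] with n han hbn
  calc dist (a n) a₀ ≤ dist (a n) (b n) + dist (b n) b₀ + dist b₀ a₀ := dist_triangle4 ..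
    _ < ε := by linarith [dist_comm a₀ b₀]

theorem stmt16_general {E : Type*} [NormedAddCommGroup E] [InnerProductSpace ℝ E]
    (G : E → ℝ) (hG : ContDiff ℝ 1 G)
    (happrox : ∀ δ > (0:ℝ), ∃ F : Submodule ℝ E, FiniteDimensional ℝ F ∧
      ∀ v : E, ‖v‖ ≤ 1 → ∀ h ∈ Fᗮ, |fderiv ℝ G v h| ≤ δ * ‖h‖) :
    (∀ δ > (0:ℝ), ∀ F : Submodule ℝ E, FiniteDimensional ℝ F →
      (∀ v : E, ‖v‖ ≤ 1 → ∀ h ∈ Fᗮ, |fderiv ℝ G v h| ≤ δ * ‖h‖) →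
      ∀ P : E →L[ℝ] E, (∀ v, P v ∈ F) → (∀ v, v - P v ∈ Fᗮ) →
      ∀ v : E, ‖v‖ ≤ 1 → |G v - G (P v)| ≤ δ) ∧
    (∀ (v : ℕ → E) (v₀ : E), (∀ n, ‖v n‖ ≤ 1) → ‖v₀‖ ≤ 1 →
      (∀ f : E →L[ℝ] ℝ, Filter.Tendsto (fun n => f (v n)) Filter.atTop (nhds (f v₀))) →
      Filter.Tendsto (fun n => G (v n)) Filter.atTop (nhds (G v₀))) := by
  have hGdiff : Differentiable ℝ G := hG.differentiable one_ne_zero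
  refine ⟨fun δ hδ F _ hF P hPF hPorth v hv ↦
    abs_sub_le_of_abs_fderiv_orthogonal_le hGdiff hδ.le hF (hPF v) (hPorth v) hv, ?_⟩
  intro v v₀ hv hv₀ hweak
  refine tendsto_of_forall_eventually_dist_le fun ε hε ↦ ?_
  obtain ⟨F, _, hF⟩ := happrox ε hε
  have hnear (u : E) (hu : ‖u‖ ≤ 1) : dist (G u) (G (F.starProjection u)) ≤ ε :=
    abs_sub_le_of_abs_fderiv_orthogonal_le hGdiff hε.le hF (F.starProjection_apply_mem u)
      (F.sub_starProjection_mem_orthogonal u) hu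
  exact ⟨fun n ↦ G (F.starProjection (v n)), G (F.starProjection v₀),
    (hG.continuous.tendsto _).comp <| (continuous_subtype_val.tendsto _).comp
      (F.orthogonalProjectionOnto.tendsto_apply_of_forall_tendsto_dual hweak),
    .of_forall fun n ↦ hnear (v n) (hv n), hnear v₀ hv₀⟩

theorem stmt16 {E : Type*} [NormedAddCommGroup E] [InnerProductSpace ℝ E]
    [CompleteSpace E]
    (G : E → ℝ) (hG : ContDiff ℝ 1 G)
    (happrox : ∀ δ > (0:ℝ), ∃ F : Submodule ℝ E, FiniteDimensional ℝ F ∧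
      ∀ v : E, ‖v‖ ≤ 1 → ∀ h ∈ Fᗮ, |fderiv ℝ G v h| ≤ δ * ‖h‖) :
    (∀ δ > (0:ℝ), ∀ F : Submodule ℝ E, FiniteDimensional ℝ F →
      (∀ v : E, ‖v‖ ≤ 1 → ∀ h ∈ Fᗮ, |fderiv ℝ G v h| ≤ δ * ‖h‖) →
      ∀ P : E →L[ℝ] E, (∀ v, P v ∈ F) → (∀ v, v - P v ∈ Fᗮ) →
      ∀ v : E, ‖v‖ ≤ 1 → |G v - G (P v)| ≤ δ) ∧
    (∀ (v : ℕ → E) (v₀ : E), (∀ n, ‖v n‖ ≤ 1) → ‖v₀‖ ≤ 1 →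
      (∀ f : E →L[ℝ] ℝ, Filter.Tendsto (fun n => f (v n)) Filter.atTop (nhds (f v₀))) →
      Filter.Tendsto (fun n => G (v n)) Filter.atTop (nhds (G v₀))) :=
  stmt16_general G hG happrox
end

section
/- Let ω ∈ [1/2, 3/2], γ > 0, with |ωl − j| ≥ γ/l for all positive integers l ≠ j, and ω irrational. For u = Σ_{l≥0, j≥1} u_{lj} cos(lt) sin(jx) with Σ u_{lj}²(l²+j²)³ < ∞, define w_{lj} = u_{lj}/(ω²l² − j²) for j ≠ l. Then there is an absolute constant C (independent of γ, ω, u) such that Σ_{l≥0, j≥1, j≠l} w_{lj}² (l⁶ + j⁶) ≤ (C/γ)² Σ_{l≥0,j≥1} u_{lj}²(l²+j²)³. More precisely, splitting the sum: for j ≥ 2ωl one has |ω²l² − j²| ≥ 3j²/4 so that part is bounded by C Σ u_{lj}² j², and for j < 2ωl, j ≠ l one uses |ω²l² − j²| ≥ γ/2 and j ≤ 3l to bound that part by (C/γ²) Σ u_{lj}² l⁶. -/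
/-! The small divisors never get small: from `|ωl - j| ≥ γ/l` and `ωl + j ≥ l/2` one gets
`|ω²l² - j²| ≥ γ/2` for all `j ≠ l`, and for `l = 0` the divisor is `j² ≥ 1 ≥ γ/2` because the
gap condition at `(l, j) = (1, 2)` forces `γ ≤ 3/2`. Hence `w_{lj}² ≤ (2/γ)² u_{lj}²` termwise,
and `l⁶ + j⁶ ≤ (l² + j²)³` finishes the comparison of the two series. -/

open Real

lemma pow_six_add_pow_six_le (a b : ℝ) : a ^ 6 + b ^ 6 ≤ (a ^ 2 + b ^ 2) ^ 3 := by
  nlinarith [mul_nonneg (mul_nonneg (sq_nonneg a) (sq_nonneg b)) (add_nonneg (sq_nonneg a) (sq_nonneg b))]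

lemma div_sq_le_div_sq_of_le_abs {u d c : ℝ} (hc : 0 < c) (hcd : c ≤ |d|) :
    (u / d) ^ 2 ≤ (u / c) ^ 2 := by
  rw [← sq_abs, abs_div, ← sq_abs (u / c), abs_div, abs_of_pos hc]
  gcongr

lemma tsum_le_mul_tsum {ι : Type*} {f g : ι → ℝ} {c : ℝ} (hf : ∀ i, 0 ≤ f i)
    (hfg : ∀ i, f i ≤ c * g i) (hg : Summable g) : ∑' i, f i ≤ c * ∑' i, g i := by
  rw [← tsum_mul_left]
  exact (Summable.of_nonneg_of_le hf hfg (hg.mul_left c)).tsum_le_tsum hfg (hg.mul_left c)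

lemma half_le_abs_sq_sub_sq {γ ω l j : ℝ} (hω : 1 / 2 ≤ ω) (hl : 0 < l) (hj : 0 ≤ j)
    (hgap : γ / l ≤ |ω * l - j|) : γ / 2 ≤ |ω ^ 2 * l ^ 2 - j ^ 2| := by
  have hsum : l / 2 ≤ ω * l + j := by nlinarith
  calc γ / 2 = γ / l * (l / 2) := by field_simp
    _ ≤ |ω * l - j| * (ω * l + j) := by gcongr
    _ = |ω ^ 2 * l ^ 2 - j ^ 2| := by
      rw [← abs_of_nonneg (hsum.trans' (by positivity)), ← abs_mul]
      ring_nf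

section DiophantineGap

variable {γ ω : ℝ} (hω : ω ∈ Set.Icc (1 / 2 : ℝ) (3 / 2))
  (hgap : ∀ l j : ℕ, 1 ≤ l → 1 ≤ j → j ≠ l → γ / l ≤ |ω * l - j|)
include hω hgap

lemma le_three_halves_of_gap : γ ≤ 3 / 2 := by
  have h := hgap 1 2 le_rfl (by norm_num) (by norm_num)
  push_cast at h
  rw [abs_of_neg (by linarith [hω.2])] at h
  linarith [hω.1]

lemma half_le_abs_small_divisor {l j : ℕ} (hj : 1 ≤ j) (hjl : j ≠ l) :
    γ / 2 ≤ |ω ^ 2 * (l : ℝ) ^ 2 - (j : ℝ) ^ 2| := by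
  rcases Nat.eq_zero_or_pos l with rfl | hl
  · have hj' : (1 : ℝ) ≤ j := by exact_mod_cast hj
    rw [Nat.cast_zero, abs_of_nonpos (by nlinarith)]
    nlinarith [le_three_halves_of_gap hω hgap]
  · exact half_le_abs_sq_sub_sq hω.1 (by exact_mod_cast hl) j.cast_nonneg (hgap l j hl hj hjl)

end DiophantineGap

theorem stmt19 :
    ∃ C > (0:ℝ), ∀ γ ω : ℝ, 0 < γ → ω ∈ Set.Icc (1/2 : ℝ) (3/2) → Irrational ω →
      (∀ l j : ℕ, 1 ≤ l → 1 ≤ j → j ≠ l → γ / l ≤ |ω * l - j|) →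
      ∀ u : ℕ × ℕ → ℝ, (∀ l : ℕ, u (l, 0) = 0) →
      Summable (fun q : ℕ × ℕ => (u q)^2 * ((q.1:ℝ)^2 + (q.2:ℝ)^2)^3) →
      (∑' q : ℕ × ℕ, if q.2 ≠ q.1 then
          (u q / (ω^2 * (q.1:ℝ)^2 - (q.2:ℝ)^2))^2 * ((q.1:ℝ)^6 + (q.2:ℝ)^6) else 0)
        ≤ (C/γ)^2 * ∑' q : ℕ × ℕ, (u q)^2 * ((q.1:ℝ)^2 + (q.2:ℝ)^2)^3 := by
  refine ⟨2, two_pos, fun γ ω hγ hω _ hgap u hu0 hsum => tsum_le_mul_tsum ?_ ?_ hsum⟩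
  · intro q
    split_ifs <;> positivity
  · rintro ⟨l, j⟩
    split_ifs with hjl
    · rcases Nat.eq_zero_or_pos j with rfl | hj
      · simp [hu0]
      have hdiv := div_sq_le_div_sq_of_le_abs (u := u (l, j)) (by positivity)
        (half_le_abs_small_divisor hω hgap hj hjl)
      calc (u (l, j) / (ω ^ 2 * (l : ℝ) ^ 2 - (j : ℝ) ^ 2)) ^ 2 * ((l : ℝ) ^ 6 + (j : ℝ) ^ 6)
          ≤ (u (l, j) / (γ / 2)) ^ 2 * (((l : ℝ) ^ 2 + (j : ℝ) ^ 2) ^ 3) := by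
            gcongr
            exact pow_six_add_pow_six_le _ _
        _ = (2 / γ) ^ 2 * (u (l, j) ^ 2 * ((l : ℝ) ^ 2 + (j : ℝ) ^ 2) ^ 3) := by
            field_simp
    · positivity
end
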